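/- Let n ≥ 2, h > 0, z ∈ ℂⁿ, and ω a unit vector in ℝⁿ. Then the Radon transform of the Gaussian y ↦ exp(-π(z-y)²/h) over the hyperplane {x : x·ω = t} equals h^{(n-1)/2} · exp(-π(z·ω - t)²/h), where (z-y)² denotes the bilinear (non-conjugated) square Σⱼ(zⱼ - yⱼ)². -/

import Mathlib

/-!
Write `z = a + i m` with `a m : ℝⁿ`, so that `∑ⱼ (zⱼ - xⱼ)²` is the bilinear square of
`(a - x) + i m`. On the hyperplane `x = t ω + y`, `y ⊥ ω`, splitting `a` and `m` along `ω` and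
`ω^⊥` separates this square into `(z·ω - t)²` plus the bilinear square of `(P a - y) + i P m`,
`P` the projection onto `ω^⊥`. After the translation `y ↦ P a - y` the remaining integral over
`ω^⊥` is the Gaussian `∫ exp (-b ‖y‖² + c ⟪P m, y⟫)`, and the factor `exp (c² ‖P m‖² / 4b)` it
produces exactly cancels `exp (b ‖P m‖²)`, leaving `(π / b) ^ (dim ω^⊥ / 2) = h ^ ((n - 1) / 2)`.
-/

open MeasureTheory Complex Real
open scoped RealInnerProductSpace

section InnerProductSpace

variable {V : Type*} [NormedAddCommGroup V] [InnerProductSpace ℝ V]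

/-- The bilinear (not Hermitian) square of `a + i m` in the complexification of `V`. -/
noncomputable def complexSq (a m : V) : ℂ := ((‖a‖ ^ 2 - ‖m‖ ^ 2 : ℝ) : ℂ) + 2 * ⟪a, m⟫ * I

theorem complexSq_add_add {a₁ m₁ a₂ m₂ : V} (ha : ⟪a₁, a₂⟫ = 0) (ham : ⟪a₁, m₂⟫ = 0)
    (hma : ⟪a₂, m₁⟫ = 0) (hm : ⟪m₁, m₂⟫ = 0) :
    complexSq (a₁ + a₂) (m₁ + m₂) = complexSq a₁ m₁ + complexSq a₂ m₂ := by
  simp only [complexSq, norm_add_sq_real, inner_add_left, inner_add_right, ha, ham, hma, hm]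
  push_cast
  ring

theorem complexSq_smul_smul {ω : V} (hω : ‖ω‖ = 1) (c e : ℝ) :
    complexSq (c • ω) (e • ω) = (c + e * I) ^ 2 := by
  simp only [complexSq, norm_smul, real_inner_smul_left, real_inner_smul_right,
    real_inner_self_eq_norm_sq, hω, Real.norm_eq_abs, mul_one, sq_abs]
  push_cast
  linear_combination -(e : ℂ) ^ 2 * I_sq

theorem integral_cexp_neg_mul_complexSq_sub [FiniteDimensional ℝ V] [MeasurableSpace V]
    [BorelSpace V] {b : ℂ} (hb : 0 < b.re) (a m : V) :
    ∫ y : V, cexp (-b * complexSq (a - y) m) = (π / b) ^ (Module.finrank ℝ V / 2 : ℂ) := by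
  have hb0 : b ≠ 0 := fun h ↦ by simp [h] at hb
  have hsq (y : V) :
      -b * complexSq y m = -b * ‖y‖ ^ 2 + (-2 * b * I) * ⟪m, y⟫ + b * ‖m‖ ^ 2 := by
    simp only [complexSq, real_inner_comm y m]
    push_cast
    ring
  have hcancel : (-2 * b * I) ^ 2 * ‖m‖ ^ 2 / (4 * b) + b * ‖m‖ ^ 2 = 0 := by
    rw [mul_pow, I_sq]
    field_simp
    ring
  calc ∫ y : V, cexp (-b * complexSq (a - y) m) = ∫ y : V, cexp (-b * complexSq y m) :=
        integral_sub_left_eq_self (fun y ↦ cexp (-b * complexSq y m)) _ a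
    _ = (∫ y : V, cexp (-b * ‖y‖ ^ 2 + (-2 * b * I) * ⟪m, y⟫)) * cexp (b * ‖m‖ ^ 2) := by
        simp only [hsq, Complex.exp_add]
        exact integral_mul_const _ _
    _ = (π / b) ^ (Module.finrank ℝ V / 2 : ℂ) := by
        rw [GaussianFourier.integral_cexp_neg_mul_sq_norm_add hb, mul_assoc, ← Complex.exp_add,
          hcancel, Complex.exp_zero, mul_one]

variable {ω : V}

theorem inner_smul_add_orthogonalProjectionOnto_eq_self (hω : ‖ω‖ = 1) (v : V) :
    ⟪v, ω⟫ • ω + ((ℝ ∙ ω)ᗮ.orthogonalProjectionOnto v : V) = v := by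
  rw [real_inner_comm, ← Submodule.starProjection_unit_singleton ℝ hω]
  exact (ℝ ∙ ω).starProjection_add_starProjection_orthogonal v

theorem complexSq_sub_smul_add (hω : ‖ω‖ = 1) (a m : V) (t : ℝ) (y : (ℝ ∙ ω)ᗮ) :
    complexSq (a - (t • ω + y)) m = ((⟪a, ω⟫ - t : ℝ) + ⟪m, ω⟫ * I) ^ 2
      + complexSq ((ℝ ∙ ω)ᗮ.orthogonalProjectionOnto a - y)
          ((ℝ ∙ ω)ᗮ.orthogonalProjectionOnto m) := by
  set P := (ℝ ∙ ω)ᗮ.orthogonalProjectionOnto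
  have hω_mem : ω ∈ ℝ ∙ ω := Submodule.mem_span_singleton_self ω
  have hperp (u : (ℝ ∙ ω)ᗮ) : ⟪ω, (u : V)⟫ = 0 :=
    Submodule.inner_right_of_mem_orthogonal hω_mem u.2
  have hperp' (u : (ℝ ∙ ω)ᗮ) : ⟪(u : V), ω⟫ = 0 :=
    Submodule.inner_left_of_mem_orthogonal hω_mem u.2
  have ha : a - (t • ω + y) = (⟪a, ω⟫ - t) • ω + ((P a - y : (ℝ ∙ ω)ᗮ) : V) := by
    conv_lhs => rw [← inner_smul_add_orthogonalProjectionOnto_eq_self hω a]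
    simp only [Submodule.coe_sub]
    module
  calc complexSq (a - (t • ω + y)) m
      = complexSq ((⟪a, ω⟫ - t) • ω + ((P a - y : (ℝ ∙ ω)ᗮ) : V)) (⟪m, ω⟫ • ω + (P m : V)) := by
        rw [ha, inner_smul_add_orthogonalProjectionOnto_eq_self hω m]
    _ = _ := by
        rw [complexSq_add_add, complexSq_smul_smul hω]
        · rfl
        all_goals simp only [real_inner_smul_left, real_inner_smul_right, hperp, hperp', mul_zero]

theorem finrank_orthogonal_span_singleton_add_one [FiniteDimensional ℝ V] (hω : ω ≠ 0) :
    Module.finrank ℝ (ℝ ∙ ω)ᗮ + 1 = Module.finrank ℝ V := by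
  rw [← (ℝ ∙ ω).finrank_add_finrank_orthogonal, finrank_span_singleton hω, add_comm]

end InnerProductSpace

section EuclideanSpace

variable {ι : Type*} [Fintype ι]

theorem sum_sq_eq_complexSq (w : ι → ℂ) :
    ∑ j, w j ^ 2 = complexSq (WithLp.toLp 2 fun j ↦ (w j).re : EuclideanSpace ℝ ι)
      (WithLp.toLp 2 fun j ↦ (w j).im) := by
  simp only [complexSq, EuclideanSpace.norm_sq_eq, PiLp.inner_apply, RCLike.inner_apply,
    conj_trivial, Real.norm_eq_abs, sq_abs]
  push_cast
  rw [Finset.mul_sum, Finset.sum_mul, ← Finset.sum_sub_distrib, ← Finset.sum_add_distrib]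
  refine Finset.sum_congr rfl fun j _ ↦ ?_
  conv_lhs => rw [← re_add_im (w j)]
  linear_combination ((w j).im : ℂ) ^ 2 * I_sq

theorem sum_mul_ofReal_eq_inner (z : ι → ℂ) (u : EuclideanSpace ℝ ι) :
    ∑ j, z j * (u j : ℂ) = ⟪(WithLp.toLp 2 fun j ↦ (z j).re : EuclideanSpace ℝ ι), u⟫
      + ⟪(WithLp.toLp 2 fun j ↦ (z j).im : EuclideanSpace ℝ ι), u⟫ * I := by
  simp only [PiLp.inner_apply, RCLike.inner_apply, conj_trivial]
  push_cast
  rw [Finset.sum_mul, ← Finset.sum_add_distrib]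
  refine Finset.sum_congr rfl fun j _ ↦ ?_
  conv_lhs => rw [← re_add_im (z j)]
  ring

end EuclideanSpace

theorem radon_of_gaussian_general (n : ℕ) (h : ℝ) (hh : 0 < h)
    (z : Fin n → ℂ) (ω : EuclideanSpace ℝ (Fin n)) (hω : ‖ω‖ = 1) (t : ℝ) :
    ∫ y : ↥((ℝ ∙ ω)ᗮ),
        Complex.exp (-Real.pi *
          (∑ j, (z j - ((t • ω + (y : EuclideanSpace ℝ (Fin n))) j : ℝ)) ^ 2) / h)
      = ((h ^ (((n : ℝ) - 1) / 2) : ℝ) : ℂ) *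
          Complex.exp (-Real.pi * ((∑ j, z j * ((ω j : ℝ) : ℂ)) - t) ^ 2 / h) := by
  set P := (ℝ ∙ ω)ᗮ.orthogonalProjectionOnto
  set a : EuclideanSpace ℝ (Fin n) := WithLp.toLp 2 fun j ↦ (z j).re
  set m : EuclideanSpace ℝ (Fin n) := WithLp.toLp 2 fun j ↦ (z j).im
  have hexponent (y : (ℝ ∙ ω)ᗮ) :
      -π * (∑ j, (z j - ((t • ω + (y : EuclideanSpace ℝ (Fin n))) j : ℝ)) ^ 2) / h
        = -π * ((∑ j, z j * ((ω j : ℝ) : ℂ)) - t) ^ 2 / h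
          + -(π / h : ℂ) * complexSq (P a - y) (P m) := by
    have hre : (WithLp.toLp 2 fun j ↦ (z j - ((t • ω + (y : EuclideanSpace ℝ (Fin n))) j : ℂ)).re
        : EuclideanSpace ℝ (Fin n)) = a - (t • ω + y) := by
      ext j; simp [a]
    rw [sum_sq_eq_complexSq, hre, complexSq_sub_smul_add hω, sum_mul_ofReal_eq_inner]
    simp only [sub_im, ofReal_im, sub_zero]
    push_cast
    ring
  have hdim : (Module.finrank ℝ (ℝ ∙ ω)ᗮ : ℝ) = n - 1 := by
    have := finrank_orthogonal_span_singleton_add_one (norm_ne_zero_iff.mp (hω ▸ one_ne_zero))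
    rw [finrank_euclideanSpace_fin] at this
    exact eq_sub_of_add_eq (by exact_mod_cast this)
  have hb : 0 < (π / h : ℂ).re := by
    rw [← ofReal_div, ofReal_re]; positivity
  simp_rw [hexponent, Complex.exp_add]
  rw [integral_const_mul, integral_cexp_neg_mul_complexSq_sub hb, mul_comm]
  congr 1
  rw [div_div_cancel₀ (ofReal_ne_zero.mpr pi_ne_zero), ← ofReal_natCast, hdim, ← ofReal_ofNat,
    ← ofReal_div, ← ofReal_cpow hh.le]

theorem radon_of_gaussian (n : ℕ) (hn : 2 ≤ n) (h : ℝ) (hh : 0 < h)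
    (z : Fin n → ℂ) (ω : EuclideanSpace ℝ (Fin n)) (hω : ‖ω‖ = 1) (t : ℝ) :
    ∫ y : ↥((ℝ ∙ ω)ᗮ),
        Complex.exp (-Real.pi *
          (∑ j, (z j - ((t • ω + (y : EuclideanSpace ℝ (Fin n))) j : ℝ)) ^ 2) / h)
      = ((h ^ (((n : ℝ) - 1) / 2) : ℝ) : ℂ) *
          Complex.exp (-Real.pi * ((∑ j, z j * ((ω j : ℝ) : ℂ)) - t) ^ 2 / h) :=
  radon_of_gaussian_general n h hh z ω hω t
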